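/- arXiv:hep-th/0108110 — 4 statements merged into one kernel-verified Lean document; each statement's English description precedes it below -/
import Mathlib

section
/- Let L be a meromorphic r×r matrix function on a disc U ⊂ ℂ with at most a simple pole at z = z_s, Laurent expansion L = L_{s0}/(z−z_s) + L_{s1} + O(z−z_s), with L_{s0} = β α^T of rank ≤ 1 for some nonzero vectors α, β ∈ ℂʳ. Then L satisfies (i) α^T β = tr L_{s0} = 0 and (ii) α^T L_{s1} = κ α^T for some scalar κ, if and only if there exist matrix functions Φ(z) and L̂(z) holomorphic on U, with det Φ having at most a simple zero at z_s and Φ invertible away from z_s, such that L(z) = Φ(z) L̂(z) Φ(z)^{−1}. -/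
open Matrix Metric Filter Topology

set_option maxHeartbeats 1000000
set_option linter.unusedVariables false


lemma analyticAt_dslope_self {f : ℂ → ℂ} {a : ℂ} (hf : AnalyticAt ℂ f a) :
    AnalyticAt ℂ (dslope f a) a := by
  obtain ⟨p, hp⟩ := hf
  exact ⟨p.fslope, hp.has_fpower_series_dslope_fslope⟩

lemma differentiableOn_dslope_of_isOpen {f : ℂ → ℂ} {s : Set ℂ} (hs : IsOpen s) {zs : ℂ}
    (hzs : zs ∈ s) (hf : DifferentiableOn ℂ f s) : DifferentiableOn ℂ (dslope f zs) s := by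
  intro z hz
  rcases eq_or_ne z zs with rfl | hne
  · exact (analyticAt_dslope_self (hf.analyticAt (hs.mem_nhds hz))).differentiableAt.differentiableWithinAt
  · exact (differentiableWithinAt_dslope_of_ne hne).2 (hf z hz)

lemma differentiableOn_finset_prod {ι : Type*} {s : Finset ι} {f : ι → ℂ → ℂ} {t : Set ℂ}
    (h : ∀ i ∈ s, DifferentiableOn ℂ (f i) t) :
    DifferentiableOn ℂ (fun z => ∏ i ∈ s, f i z) t := by
  classical
  induction s using Finset.induction with
  | empty => simpa using differentiableOn_const (1 : ℂ)
  | insert _ _ hx ih =>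
      simp only [Finset.prod_insert hx]
      exact (h _ (Finset.mem_insert_self _ _)).mul
        (ih fun i hi => h i (Finset.mem_insert_of_mem hi))

lemma differentiableOn_det {r : ℕ} {Φ : ℂ → Matrix (Fin r) (Fin r) ℂ} {s : Set ℂ}
    (h : ∀ i j, DifferentiableOn ℂ (fun z => Φ z i j) s) :
    DifferentiableOn ℂ (fun z => (Φ z).det) s := by
  have : (fun z => (Φ z).det)
      = fun z => ∑ σ : Equiv.Perm (Fin r), ((Equiv.Perm.sign σ : ℤ) : ℂ) * ∏ i, Φ z (σ i) i := by
    funext z; rw [Matrix.det_apply']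
  rw [this]
  exact DifferentiableOn.fun_sum fun σ _ =>
    (differentiableOn_finset_prod fun i _ => h (σ i) i).const_mul _

lemma eq_at_of_eqOn {X : Type*} [TopologicalSpace X] [T2Space X] {s : Set ℂ}
    (hs : IsOpen s) {a : ℂ} (ha : a ∈ s) {F G : ℂ → X}
    (hF : ContinuousWithinAt F s a) (hG : ContinuousWithinAt G s a)
    (h : ∀ z ∈ s, z ≠ a → F z = G z) : F a = G a := by
  have h1 : 𝓝[s \ {a}] a = 𝓝[{a}ᶜ] a := by
    rw [Set.diff_eq, Set.inter_comm]
    exact nhdsWithin_inter_of_mem' (mem_nhdsWithin_of_mem_nhds (hs.mem_nhds ha))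
  have hne : (𝓝[s \ {a}] a).NeBot := by
    rw [h1]; exact Module.punctured_nhds_neBot ℂ ℂ a
  have hFt : Tendsto F (𝓝[s \ {a}] a) (𝓝 (F a)) :=
    hF.tendsto.mono_left (nhdsWithin_mono _ Set.diff_subset)
  have hGt : Tendsto G (𝓝[s \ {a}] a) (𝓝 (G a)) :=
    hG.tendsto.mono_left (nhdsWithin_mono _ Set.diff_subset)
  have heq : F =ᶠ[𝓝[s \ {a}] a] G :=
    eventually_nhdsWithin_of_forall fun z hz => h z hz.1 (by simpa using hz.2)
  exact tendsto_nhds_unique (hFt.congr' heq) hGt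


lemma left_kernel_span {r : ℕ} (A : Matrix (Fin r) (Fin r) ℂ) {α x : Fin r → ℂ} (hα : α ≠ 0)
    (hαA : vecMul α A = 0) (hxA : vecMul x A = 0) (hadj : adjugate A ≠ 0) :
    ∃ κ : ℂ, x = κ • α := by
  -- pick a nonzero adjugate entry
  obtain ⟨i, hi⟩ := Function.ne_iff.1 hadj
  obtain ⟨j, hij⟩ := Function.ne_iff.1 hi
  have hdet : (A.updateRow j (Pi.single i 1)).det ≠ 0 := by
    rwa [← adjugate_apply]
  have hB : IsUnit (A.updateRow j (Pi.single i 1)) :=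
    (Matrix.isUnit_iff_isUnit_det _).2 (isUnit_iff_ne_zero.2 hdet)
  have hli : LinearIndependent ℂ (fun k => A.updateRow j (Pi.single i 1) k) :=
    Matrix.linearIndependent_rows_iff_isUnit.2 hB
  have hvm : ∀ y : Fin r → ℂ, vecMul y A = ∑ k, y k • A k := by
    intro y; funext c
    simp [vecMul, dotProduct, Finset.sum_apply]
  have key : ∀ y : Fin r → ℂ, vecMul y A = 0 → y j = 0 → y = 0 := by
    intro y hy hyj
    have hsum : ∑ k, y k • A.updateRow j (Pi.single i 1) k = 0 := by
      rw [← hy, hvm]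
      refine Finset.sum_congr rfl fun k _ => ?_
      rcases eq_or_ne k j with rfl | hk
      · simp [hyj]
      · rw [Matrix.updateRow_ne hk]
    have := Fintype.linearIndependent_iff.1 hli y hsum
    funext k; exact this k
  have hαj : α j ≠ 0 := fun h0 => hα (key α hαA h0)
  have hy0 : α j • x - x j • α = 0 := by
    apply key
    · rw [Matrix.sub_vecMul, Matrix.smul_vecMul, Matrix.smul_vecMul, hαA, hxA]
      simp
    · simp [mul_comm]
  refine ⟨x j / α j, ?_⟩
  have := sub_eq_zero.1 hy0
  funext k
  have := congrFun this k
  simp only [Pi.smul_apply, smul_eq_mul] at this ⊢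
  field_simp
  linear_combination this


lemma exists_unit_row {r : ℕ} [NeZero r] (α : Fin r → ℂ) (hα : α ≠ 0) :
    ∃ h : Matrix (Fin r) (Fin r) ℂ, IsUnit h ∧ h 0 = α := by
  obtain ⟨i₀, hi₀⟩ := Function.ne_iff.1 hα
  simp only [Pi.zero_apply] at hi₀
  set σ := Equiv.swap (0 : Fin r) i₀ with hσ
  set h : Matrix (Fin r) (Fin r) ℂ := fun k => if k = 0 then α else Pi.single (σ k) 1 with hh
  refine ⟨h, ?_, by simp [hh]⟩
  rw [← Matrix.linearIndependent_rows_iff_isUnit]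
  rw [Fintype.linearIndependent_iff]
  intro g hg
  have hg' : ∀ m, ∑ k, g k * h k m = 0 := by
    intro m
    have := congrFun hg m
    simpa [Finset.sum_apply] using this
  have hg0 : g 0 = 0 := by
    have := hg' i₀
    rw [Finset.sum_eq_single 0] at this
    · simp only [hh, if_pos rfl] at this
      exact (mul_eq_zero.1 this).resolve_right hi₀
    · intro k _ hk
      have : σ k ≠ i₀ := by
        intro hc
        exact hk (by simpa using σ.injective (hc.trans (Equiv.swap_apply_left 0 i₀).symm))
      simp [hh, hk, Pi.single_apply, this.symm]
    · simp
  intro l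
  rcases eq_or_ne l 0 with rfl | hl
  · exact hg0
  · have := hg' (σ l)
    rw [Finset.sum_eq_single l] at this
    · simpa [hh, hl, Pi.single_apply] using this
    · intro k _ hk
      rcases eq_or_ne k 0 with rfl | hk0
      · simp [hg0]
      · have : σ l ≠ σ k := fun hc => hk (σ.injective hc).symm
        simp [hh, hk0, Pi.single_apply, this.symm]
    · simp


lemma vecMulVec_mul_eq {r : ℕ} (w v : Fin r → ℂ) (A : Matrix (Fin r) (Fin r) ℂ) :
    vecMulVec w v * A = vecMulVec w (vecMul v A) := by
  ext i j
  simp [Matrix.mul_apply, Matrix.vecMulVec_apply, Matrix.vecMul, dotProduct,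
    Finset.mul_sum, mul_assoc]

lemma mul_vecMulVec_eq {r : ℕ} (w v : Fin r → ℂ) (A : Matrix (Fin r) (Fin r) ℂ) :
    A * vecMulVec w v = vecMulVec (A *ᵥ w) v := by
  ext i j
  simp [Matrix.mul_apply, Matrix.vecMulVec_apply, Matrix.mulVec, dotProduct,
    Finset.sum_mul, mul_assoc]

lemma vecMul_vecMulVec_eq {r : ℕ} (x w v : Fin r → ℂ) :
    vecMul x (vecMulVec w v) = dotProduct x w • v := by
  funext j
  simp [Matrix.vecMul, Matrix.vecMulVec_apply, dotProduct, Finset.sum_mul, mul_assoc]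

lemma vecMul_smul_mat {r : ℕ} (x : Fin r → ℂ) (c : ℂ) (A : Matrix (Fin r) (Fin r) ℂ) :
    vecMul x (c • A) = c • vecMul x A := by
  funext j
  simp [Matrix.vecMul, dotProduct, Finset.mul_sum]
  ring_nf
  congr 1; funext k; ring

lemma vecMul_add_mat {r : ℕ} (x : Fin r → ℂ) (A B : Matrix (Fin r) (Fin r) ℂ) :
    vecMul x (A + B) = vecMul x A + vecMul x B := by
  funext j
  simp [Matrix.vecMul, dotProduct, Finset.sum_add_distrib, mul_add]

lemma cwa_of_entries {r : ℕ} {Φ : ℂ → Matrix (Fin r) (Fin r) ℂ} {s : Set ℂ} {a : ℂ}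
    (h : ∀ i j, ContinuousWithinAt (fun z => Φ z i j) s a) :
    ContinuousWithinAt (fun z => Φ z) s a :=
  continuousWithinAt_pi.2 fun i => continuousWithinAt_pi.2 fun j => h i j

lemma cwa_pi_of_entries {r : ℕ} {ψ : ℂ → Fin r → ℂ} {s : Set ℂ} {a : ℂ}
    (h : ∀ j, ContinuousWithinAt (fun z => ψ z j) s a) :
    ContinuousWithinAt (fun z => ψ z) s a :=
  continuousWithinAt_pi.2 h

private lemma stmt6_fwd {r : ℕ} (hr : 0 < r) (z₀ : ℂ) (ρ : ℝ) (hρ : 0 < ρ) (zs : ℂ)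
    (hzs : zs ∈ ball z₀ ρ)
    (L E : ℂ → Matrix (Fin r) (Fin r) ℂ) (α β : Fin r → ℂ) (hα : α ≠ 0) (hβ : β ≠ 0)
    (hE : ∀ i j, DifferentiableOn ℂ (fun z => E z i j) (ball z₀ ρ))
    (hL : ∀ z ∈ ball z₀ ρ, z ≠ zs → L z = (z - zs)⁻¹ • vecMulVec β α + E z)
    (h1 : dotProduct α β = 0) (κ : ℂ) (h2 : vecMul α (E zs) = κ • α) :
    ∃ Φ Lh : ℂ → Matrix (Fin r) (Fin r) ℂ,
        (∀ i j, DifferentiableOn ℂ (fun z => Φ z i j) (ball z₀ ρ)) ∧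
        (∀ i j, DifferentiableOn ℂ (fun z => Lh z i j) (ball z₀ ρ)) ∧
        (∀ z ∈ ball z₀ ρ, z ≠ zs → IsUnit (Φ z)) ∧
        ((Φ zs).det ≠ 0 ∨ deriv (fun z => (Φ z).det) zs ≠ 0) ∧
        (∀ z ∈ ball z₀ ρ, z ≠ zs → L z = Φ z * Lh z * (Φ z)⁻¹) := by
  haveI : NeZero r := ⟨hr.ne'⟩
  set S := ball z₀ ρ with hS
  have hSo : IsOpen S := isOpen_ball
  obtain ⟨h, hhu, hh0⟩ := exists_unit_row α hα
  set g := h⁻¹ with hgdef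
  have hdh : IsUnit h.det := (Matrix.isUnit_iff_isUnit_det h).1 hhu
  have hgh : g * h = 1 := Matrix.nonsing_inv_mul h hdh
  have hhg : h * g = 1 := Matrix.mul_nonsing_inv h hdh
  have hdg : g.det ≠ 0 := by
    rw [hgdef, Matrix.det_nonsing_inv, Ring.inverse_eq_inv]
    exact inv_ne_zero hdh.ne_zero
  have hαg : vecMul α g = Pi.single 0 1 := by
    funext j
    have e1 := congrFun (congrFun hhg 0) j
    simp only [Matrix.mul_apply, Matrix.one_apply] at e1
    have e2 : ∀ k, h 0 k = α k := fun k => congrFun hh0 k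
    simp only [e2] at e1
    simp only [Matrix.vecMul, dotProduct, Pi.single_apply]
    rw [e1]
    simp [eq_comm]
  set D : ℂ → Matrix (Fin r) (Fin r) ℂ :=
    fun z => Matrix.diagonal (fun k => if k = 0 then z - zs else 1) with hDdef
  set Φ : ℂ → Matrix (Fin r) (Fin r) ℂ := fun z => g * D z with hΦdef
  set M : ℂ → Matrix (Fin r) (Fin r) ℂ := fun z => h * E z * g with hMdef
  set Lh : ℂ → Matrix (Fin r) (Fin r) ℂ := fun z i j =>
    if i = 0 then (if j = 0 then M z 0 0 else dslope (fun w => M w 0 j) zs z)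
    else (if j = 0 then (h *ᵥ β) i + (z - zs) * M z i 0 else M z i j) with hLhdef
  have hMd : ∀ i j, DifferentiableOn ℂ (fun z => M z i j) S := by
    intro i j
    have e : (fun z => M z i j) = fun z => ∑ k, (∑ l, h i l * E z l k) * g k j := by
      funext z; simp [hMdef, Matrix.mul_apply]
    rw [e]
    exact DifferentiableOn.fun_sum fun k _ =>
      (DifferentiableOn.fun_sum fun l _ => (hE l k).const_mul (h i l)).mul_const (g k j)
  have hΦe : ∀ z i j, Φ z i j = g i j * (if j = 0 then z - zs else 1) := by
    intro z i j; simp [hΦdef, hDdef, Matrix.mul_diagonal]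
  have hsubd : DifferentiableOn ℂ (fun z : ℂ => z - zs) S :=
    (differentiable_id.sub (differentiable_const zs)).differentiableOn
  have hΦd : ∀ i j, DifferentiableOn ℂ (fun z => Φ z i j) S := by
    intro i j
    simp only [hΦe]
    rcases eq_or_ne j 0 with rfl | hj
    · simp only [if_pos rfl]
      exact hsubd.const_mul _
    · simp only [if_neg hj]
      exact differentiableOn_const _
  have hLhd : ∀ i j, DifferentiableOn ℂ (fun z => Lh z i j) S := by
    intro i j
    rcases eq_or_ne i 0 with rfl | hi
    · rcases eq_or_ne j 0 with rfl | hj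
      · simp only [hLhdef, if_pos rfl]
        exact hMd 0 0
      · simp only [hLhdef, if_pos rfl, if_neg hj]
        exact differentiableOn_dslope_of_isOpen hSo hzs (hMd 0 j)
    · rcases eq_or_ne j 0 with rfl | hj
      · simp only [hLhdef, if_neg hi, if_pos rfl]
        exact (differentiableOn_const _).add (hsubd.mul (hMd i 0))
      · simp only [hLhdef, if_neg hi, if_neg hj]
        exact hMd i j
  have hdetD : ∀ z, (D z).det = z - zs := by
    intro z
    rw [hDdef]
    simp only [Matrix.det_diagonal]
    rw [Finset.prod_eq_single (0 : Fin r)]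
    · simp
    · intro k _ hk; simp [hk]
    · simp
  have hdetΦ : ∀ z, (Φ z).det = g.det * (z - zs) := by
    intro z; rw [hΦdef]; simp only [Matrix.det_mul, hdetD]
  have hΦu : ∀ z ∈ S, z ≠ zs → IsUnit (Φ z) := by
    intro z _ hne
    exact (Matrix.isUnit_iff_isUnit_det _).2 (isUnit_iff_ne_zero.2
      (by rw [hdetΦ]; exact mul_ne_zero hdg (sub_ne_zero.2 hne)))
  have hderiv : deriv (fun z => (Φ z).det) zs ≠ 0 := by
    have e : (fun z => (Φ z).det) = fun z => g.det * (z - zs) := funext hdetΦ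
    rw [e]
    have hder : HasDerivAt (fun z : ℂ => g.det * (z - zs)) (g.det * 1) zs :=
      ((hasDerivAt_id zs).sub_const zs).const_mul g.det
    rw [hder.deriv]
    simpa using hdg
  -- key identities
  have hhβ0 : (h *ᵥ β) 0 = 0 := by
    have : (h *ᵥ β) 0 = dotProduct α β := by
      simp [Matrix.mulVec, hh0]
    rw [this, h1]
  have hM0 : ∀ j, j ≠ 0 → M zs 0 j = 0 := by
    intro j hj
    have e1 : ∀ k, ∑ l, h 0 l * E zs l k = κ * α k := by
      intro k
      have e2 := congrFun h2 k
      simp only [Matrix.vecMul, dotProduct, Pi.smul_apply, smul_eq_mul] at e2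
      calc ∑ l, h 0 l * E zs l k = ∑ l, α l * E zs l k := by
            refine Finset.sum_congr rfl fun l _ => ?_
            rw [congrFun hh0 l]
        _ = κ * α k := e2
    have e3 : M zs 0 j = ∑ k, (κ * α k) * g k j := by
      simp only [hMdef, Matrix.mul_apply]
      refine Finset.sum_congr rfl fun k _ => ?_
      rw [e1 k]
    rw [e3]
    have e4 : ∑ k, (κ * α k) * g k j = κ * vecMul α g j := by
      simp [Matrix.vecMul, dotProduct, Finset.mul_sum, mul_assoc]
    rw [e4, hαg]
    simp [Pi.single_apply, hj]
  -- main factorization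
  refine ⟨Φ, Lh, hΦd, hLhd, hΦu, Or.inr hderiv, ?_⟩
  intro z hz hne
  have hzne : z - zs ≠ 0 := sub_ne_zero.2 hne
  have hA : h * L z * g
      = (z - zs)⁻¹ • vecMulVec (h *ᵥ β) (Pi.single 0 1) + M z := by
    rw [hL z hz hne, Matrix.mul_add, Matrix.add_mul, Matrix.mul_smul, Matrix.smul_mul,
      mul_vecMulVec_eq, vecMulVec_mul_eq, hαg]
  have hAD : (h * L z * g) * D z = D z * Lh z := by
    ext i j
    rw [hDdef]
    rw [Matrix.mul_diagonal, Matrix.diagonal_mul]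
    have hAe : (h * L z * g) i j
        = (z - zs)⁻¹ * ((h *ᵥ β) i * ((Pi.single (0 : Fin r) (1 : ℂ) : Fin r → ℂ) j)) + M z i j := by
      rw [hA]; simp [Matrix.vecMulVec_apply]
    rw [hAe]
    rcases eq_or_ne i 0 with rfl | hi
    · rcases eq_or_ne j 0 with rfl | hj
      · simp only [hLhdef, eq_self_iff_true, if_true]
        rw [hhβ0, Pi.single_eq_same]
        ring
      · have hds : (z - zs) * dslope (fun w => M w 0 j) zs z = M z 0 j := by
          have e5 := sub_smul_dslope (fun w => M w 0 j) zs z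
          simp only [smul_eq_mul, hM0 j hj, sub_zero] at e5
          exact e5
        simp only [hLhdef, eq_self_iff_true, if_true, if_neg hj]
        rw [hds, hhβ0, Pi.single_eq_of_ne hj]
        ring
    · rcases eq_or_ne j 0 with rfl | hj
      · simp only [hLhdef, if_neg hi, eq_self_iff_true, if_true]
        rw [Pi.single_eq_same]
        field_simp
      · simp only [hLhdef, if_neg hi, if_neg hj]
        rw [Pi.single_eq_of_ne hj]
        ring
  have hstep : Φ z * Lh z = L z * Φ z := by
    have e6 : g * (h * L z * g * D z) = L z * (g * D z) := by
      simp only [Matrix.mul_assoc]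
      rw [← Matrix.mul_assoc g h, hgh, Matrix.one_mul]
    calc Φ z * Lh z = g * (D z * Lh z) := by rw [hΦdef, Matrix.mul_assoc]
      _ = g * (h * L z * g * D z) := by rw [← hAD]
      _ = L z * (g * D z) := e6
      _ = L z * Φ z := by rw [hΦdef]
  have hΦdetu : IsUnit (Φ z).det := (Matrix.isUnit_iff_isUnit_det _).1 (hΦu z hz hne)
  rw [hstep, Matrix.mul_nonsing_inv_cancel_right _ _ hΦdetu]

private lemma stmt6_back {r : ℕ} (hr : 0 < r) (z₀ : ℂ) (ρ : ℝ) (hρ : 0 < ρ) (zs : ℂ)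
    (hzs : zs ∈ ball z₀ ρ)
    (L E : ℂ → Matrix (Fin r) (Fin r) ℂ) (α β : Fin r → ℂ) (hα : α ≠ 0) (hβ : β ≠ 0)
    (hE : ∀ i j, DifferentiableOn ℂ (fun z => E z i j) (ball z₀ ρ))
    (hL : ∀ z ∈ ball z₀ ρ, z ≠ zs → L z = (z - zs)⁻¹ • vecMulVec β α + E z)
    (Φ Lh : ℂ → Matrix (Fin r) (Fin r) ℂ)
    (hΦd : ∀ i j, DifferentiableOn ℂ (fun z => Φ z i j) (ball z₀ ρ))
    (hLhd : ∀ i j, DifferentiableOn ℂ (fun z => Lh z i j) (ball z₀ ρ))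
    (hΦu : ∀ z ∈ ball z₀ ρ, z ≠ zs → IsUnit (Φ z))
    (hdet : (Φ zs).det ≠ 0 ∨ deriv (fun z => (Φ z).det) zs ≠ 0)
    (hfac : ∀ z ∈ ball z₀ ρ, z ≠ zs → L z = Φ z * Lh z * (Φ z)⁻¹) :
    dotProduct α β = 0 ∧ ∃ κ : ℂ, vecMul α (E zs) = κ • α := by
  set S := ball z₀ ρ with hS
  have hSo : IsOpen S := isOpen_ball
  -- basic continuity
  have cΦ : ContinuousWithinAt (fun z => Φ z) S zs :=
    cwa_of_entries fun i j => ((hΦd i j).continuousOn) zs hzs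
  have cE : ContinuousWithinAt (fun z => E z) S zs :=
    cwa_of_entries fun i j => ((hE i j).continuousOn) zs hzs
  have cLh : ContinuousWithinAt (fun z => Lh z) S zs :=
    cwa_of_entries fun i j => ((hLhd i j).continuousOn) zs hzs
  have czsub : ContinuousWithinAt (fun z => z - zs) S zs :=
    (continuous_id.sub continuous_const).continuousWithinAt
  -- L * Φ = Φ * Lh on the punctured ball
  have hLΦ : ∀ z ∈ S, z ≠ zs → L z * Φ z = Φ z * Lh z := by
    intro z hz hne
    have hud : IsUnit (Φ z).det := (Matrix.isUnit_iff_isUnit_det _).1 (hΦu z hz hne)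
    rw [hfac z hz hne, Matrix.nonsing_inv_mul_cancel_right _ _ hud]
  -- step 1 : vecMul α (Φ zs) = 0
  have hβαΦ : vecMulVec β α * Φ zs = 0 := by
    have key : (vecMulVec β α + (zs - zs) • E zs) * Φ zs = (zs - zs) • (Φ zs * Lh zs) :=
      eq_at_of_eqOn hSo hzs ((continuousWithinAt_const.add (czsub.smul cE)).mul cΦ)
        (czsub.smul (cΦ.mul cLh)) (fun z hz hne => by
          have h1 : (z - zs) • L z = vecMulVec β α + (z - zs) • E z := by
            rw [hL z hz hne, smul_add, smul_smul, mul_inv_cancel₀ (sub_ne_zero.2 hne), one_smul]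
          calc (vecMulVec β α + (z - zs) • E z) * Φ z
              = ((z - zs) • L z) * Φ z := by rw [h1]
            _ = (z - zs) • (L z * Φ z) := by rw [Matrix.smul_mul]
            _ = (z - zs) • (Φ z * Lh z) := by rw [hLΦ z hz hne])
    simp only [sub_self, zero_smul, add_zero] at key
    exact key
  have hαΦ : vecMul α (Φ zs) = 0 := by
    rw [vecMulVec_mul_eq] at hβαΦ
    obtain ⟨i, hi⟩ := Function.ne_iff.1 hβ
    funext j
    have h2 := congrFun (congrFun hβαΦ i) j
    simp only [Matrix.vecMulVec_apply, Matrix.zero_apply] at h2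
    simpa using (mul_eq_zero.1 h2).resolve_left (by simpa using hi)
  -- det Φ zs = 0
  have hdetzs : (Φ zs).det = 0 := by
    by_contra hne
    have hu : IsUnit (Φ zs) := (Matrix.isUnit_iff_isUnit_det _).2 (isUnit_iff_ne_zero.2 hne)
    have hinj := Matrix.vecMul_injective_iff_isUnit.2 hu
    exact hα (hinj (by simpa [Matrix.zero_vecMul] using hαΦ))
  have hd' : deriv (fun z => (Φ z).det) zs ≠ 0 := hdet.resolve_left fun h => h hdetzs
  -- dslope functions
  set d : ℂ → ℂ := dslope (fun w => (Φ w).det) zs with hdDef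
  have hdd : ∀ z, (Φ z).det = (z - zs) * d z := by
    intro z
    have h3 := sub_smul_dslope (fun w => (Φ w).det) zs z
    simp only [hdetzs, sub_zero, smul_eq_mul] at h3
    rw [← h3, hdDef]
  have hdzs : d zs ≠ 0 := by rw [hdDef, dslope_same]; exact hd'
  have cd : ContinuousWithinAt d S zs :=
    ((differentiableOn_dslope_of_isOpen hSo hzs (differentiableOn_det hΦd)).continuousOn) zs hzs
  set ψ : ℂ → Fin r → ℂ := fun z j => dslope (fun w => vecMul α (Φ w) j) zs z with hψDef
  have hfj : ∀ j, (fun w => vecMul α (Φ w) j) = fun w => ∑ k, α k * Φ w k j := by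
    intro j; funext w; simp [Matrix.vecMul, dotProduct]
  have hfjd : ∀ j, DifferentiableOn ℂ (fun w => vecMul α (Φ w) j) S := by
    intro j; rw [hfj j]
    exact DifferentiableOn.fun_sum fun k _ => (hΦd k j).const_mul (α k)
  have hψeq : ∀ z, vecMul α (Φ z) = (z - zs) • ψ z := by
    intro z; funext j
    have h3 := sub_smul_dslope (fun w => vecMul α (Φ w) j) zs z
    have h4 : vecMul α (Φ zs) j = 0 := by rw [hαΦ]; rfl
    simp only [h4, sub_zero, smul_eq_mul] at h3
    simp only [Pi.smul_apply, smul_eq_mul, hψDef]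
    rw [← h3]
  have cψ : ContinuousWithinAt ψ S zs := by
    apply continuousWithinAt_pi.2
    intro j
    exact ((differentiableOn_dslope_of_isOpen hSo hzs (hfjd j)).continuousOn) zs hzs
  -- adjugate identity at zs
  have cadj : ContinuousWithinAt (fun z => adjugate (Φ z)) S zs :=
    ((Continuous.matrix_adjugate continuous_id).continuousAt).comp_continuousWithinAt cΦ
  have cvecMul : ∀ {u : ℂ → Fin r → ℂ} {A : ℂ → Matrix (Fin r) (Fin r) ℂ},
      ContinuousWithinAt u S zs → ContinuousWithinAt A S zs →
      ContinuousWithinAt (fun z => vecMul (u z) (A z)) S zs := by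
    intro u A hu hA
    exact ((Continuous.matrix_vecMul continuous_fst continuous_snd).continuousAt).comp_continuousWithinAt
      (hu.prodMk hA)
  have hadjzs : vecMul (ψ zs) (adjugate (Φ zs)) = d zs • α := by
    exact eq_at_of_eqOn hSo hzs (cvecMul cψ cadj) (cd.smul continuousWithinAt_const)
      (fun z hz hne => by
        have hzne : z - zs ≠ 0 := sub_ne_zero.2 hne
        have h5 : vecMul (vecMul α (Φ z)) (adjugate (Φ z)) = (Φ z).det • α := by
          rw [Matrix.vecMul_vecMul, Matrix.mul_adjugate, vecMul_smul_mat, Matrix.vecMul_one]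
        rw [hψeq z, Matrix.smul_vecMul] at h5
        have h6 : (z - zs) • vecMul (ψ z) (adjugate (Φ z)) = (z - zs) • (d z • α) := by
          rw [h5, hdd z, mul_smul]
        exact smul_right_injective _ hzne h6)
  -- the main limit identity
  have hstar : dotProduct α β • ψ zs + vecMul (vecMul α (E zs)) (Φ zs) = 0 := by
    have key : dotProduct α β • ψ zs + vecMul (vecMul α (E zs)) (Φ zs)
        = (zs - zs) • vecMul (ψ zs) (Lh zs) :=
      eq_at_of_eqOn (F := fun z => dotProduct α β • ψ z + vecMul (vecMul α (E z)) (Φ z))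
        (G := fun z => (z - zs) • vecMul (ψ z) (Lh z)) hSo hzs
        (((continuousWithinAt_const (b := dotProduct α β)).smul cψ).add (cvecMul (cvecMul (u := fun _ => α) continuousWithinAt_const cE) cΦ))
        (czsub.smul (cvecMul cψ cLh)) (fun z hz hne => by
          have hzne : z - zs ≠ 0 := sub_ne_zero.2 hne
          have e1 : vecMul (vecMul α (L z)) (Φ z) = vecMul (vecMul α (Φ z)) (Lh z) := by
            rw [Matrix.vecMul_vecMul, Matrix.vecMul_vecMul, hLΦ z hz hne]
          have e2 : vecMul α (L z) = ((z - zs)⁻¹ * dotProduct α β) • α + vecMul α (E z) := by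
            rw [hL z hz hne, vecMul_add_mat, vecMul_smul_mat, vecMul_vecMulVec_eq, smul_smul]
          rw [e2, Matrix.add_vecMul, Matrix.smul_vecMul, hψeq z, Matrix.smul_vecMul] at e1
          rw [← e1, smul_smul, mul_comm, ← mul_assoc, mul_inv_cancel₀ hzne, one_mul])
    simp only [sub_self, zero_smul] at key
    exact key
  -- conclude (i)
  have hαβ : dotProduct α β = 0 := by
    have e5 : vecMul (dotProduct α β • ψ zs + vecMul (vecMul α (E zs)) (Φ zs)) (adjugate (Φ zs)) = 0 := by
      rw [hstar, Matrix.zero_vecMul]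
    rw [Matrix.add_vecMul, Matrix.smul_vecMul, hadjzs, Matrix.vecMul_vecMul,
      Matrix.mul_adjugate, hdetzs, zero_smul, Matrix.vecMul_zero, add_zero,
      smul_smul] at e5
    obtain ⟨i, hi⟩ := Function.ne_iff.1 hα
    have h6 := congrFun e5 i
    simp only [Pi.smul_apply, smul_eq_mul, Pi.zero_apply] at h6
    have h7 : dotProduct α β * d zs = 0 :=
      (mul_eq_zero.1 h6).resolve_right (by simpa using hi)
    exact (mul_eq_zero.1 h7).resolve_right hdzs
  refine ⟨hαβ, ?_⟩
  -- conclude (ii)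
  have hxΦ : vecMul (vecMul α (E zs)) (Φ zs) = 0 := by
    rw [hαβ, zero_smul, zero_add] at hstar
    exact hstar
  have hadjne : adjugate (Φ zs) ≠ 0 := by
    intro h0
    rw [h0, Matrix.vecMul_zero] at hadjzs
    obtain ⟨i, hi⟩ := Function.ne_iff.1 hα
    have := congrFun hadjzs i
    simp only [Pi.zero_apply, Pi.smul_apply, smul_eq_mul] at this
    exact hi (by
      rcases mul_eq_zero.1 this.symm with h | h
      · exact absurd h hdzs
      · simpa using h)
  exact left_kernel_span (Φ zs) hα hαΦ hxΦ hadjne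


/-- a meromorphic matrix function `L = (z−z_s)⁻¹ βαᵀ + E(z)` on a disc `U`,
with `E` holomorphic and `βαᵀ` of rank ≤ 1, satisfies the Tyurin constraints
(i) `αᵀβ = tr L_{s0} = 0` and (ii) `αᵀ L_{s1} = κ αᵀ` for some scalar `κ`
if and only if `L = Φ L̂ Φ⁻¹` with `Φ, L̂` holomorphic on `U`, `Φ` invertible away from `z_s`
and `det Φ` having at most a simple zero at `z_s`. -/
theorem stmt6 {r : ℕ} (hr : 0 < r) (z₀ : ℂ) (ρ : ℝ) (hρ : 0 < ρ) (zs : ℂ)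
    (hzs : zs ∈ ball z₀ ρ)
    (L E : ℂ → Matrix (Fin r) (Fin r) ℂ) (α β : Fin r → ℂ) (hα : α ≠ 0) (hβ : β ≠ 0)
    (hE : ∀ i j, DifferentiableOn ℂ (fun z => E z i j) (ball z₀ ρ))
    (hL : ∀ z ∈ ball z₀ ρ, z ≠ zs → L z = (z - zs)⁻¹ • vecMulVec β α + E z) :
    (dotProduct α β = 0 ∧ ∃ κ : ℂ, vecMul α (E zs) = κ • α) ↔
      ∃ Φ Lh : ℂ → Matrix (Fin r) (Fin r) ℂ,
        (∀ i j, DifferentiableOn ℂ (fun z => Φ z i j) (ball z₀ ρ)) ∧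
        (∀ i j, DifferentiableOn ℂ (fun z => Lh z i j) (ball z₀ ρ)) ∧
        (∀ z ∈ ball z₀ ρ, z ≠ zs → IsUnit (Φ z)) ∧
        ((Φ zs).det ≠ 0 ∨ deriv (fun z => (Φ z).det) zs ≠ 0) ∧
        (∀ z ∈ ball z₀ ρ, z ≠ zs → L z = Φ z * Lh z * (Φ z)⁻¹) := by
  constructor
  · rintro ⟨h1, κ, h2⟩
    exact stmt6_fwd hr z₀ ρ hρ zs hzs L E α β hα hβ hE hL h1 κ h2
  · rintro ⟨Φ, Lh, hΦd, hLhd, hΦu, hdet, hfac⟩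
    exact stmt6_back hr z₀ ρ hρ zs hzs L E α β hα hβ hE hL Φ Lh hΦd hLhd hΦu hdet hfac
end

section
/- In the setting of the previous statement: if L(z) = Φ(z) L̂(z) Φ(z)^{−1} with Φ, L̂ holomorphic on U and det Φ having a simple zero at z_s, and α ∈ ℂʳ is the (unique up to scale) nonzero vector with α^T Φ(z_s) = 0, then tr L is holomorphic at z_s; moreover α^T L(z) extends holomorphically to z_s and its value at z_s is proportional to α^T. -/
open Matrix Metric Filter Topology

private lemma detDiffOn {n : ℕ} {s : Set ℂ} {M : ℂ → Matrix (Fin n) (Fin n) ℂ}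
    (h : ∀ i j, DifferentiableOn ℂ (fun z => M z i j) s) :
    DifferentiableOn ℂ (fun z => (M z).det) s := by
  simp only [Matrix.det_apply']
  exact DifferentiableOn.fun_sum fun σ _ =>
    (DifferentiableOn.fun_finsetProd fun i _ => h (σ i) i).const_mul _

private lemma detDiffAt {n : ℕ} {M : ℂ → Matrix (Fin n) (Fin n) ℂ} {zs : ℂ}
    (h : ∀ i j, DifferentiableAt ℂ (fun z => M z i j) zs) :
    DifferentiableAt ℂ (fun z => (M z).det) zs := by
  simp only [Matrix.det_apply']
  exact DifferentiableAt.fun_sum fun σ _ =>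
    (DifferentiableAt.fun_finsetProd fun i _ => h (σ i) i).const_mul _

private lemma det_updateRow_eq_sum' {n : ℕ} (M : Matrix (Fin n) (Fin n) ℂ) (k : Fin n)
    (v : Fin n → ℂ) : (M.updateRow k v).det = ∑ i, v i * M.adjugate i k := by
  have hv : v = ∑ i, v i • (Pi.single i (1 : ℂ) : Fin n → ℂ) := by
    funext j
    simp [Pi.single_apply, Finset.sum_ite_eq', mul_comm]
  rw [← Matrix.cramer_transpose_apply]
  conv_lhs => rw [hv]
  rw [map_sum]
  simp only [LinearMap.map_smul, Finset.sum_apply, Pi.smul_apply, smul_eq_mul,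
    Matrix.cramer_transpose_apply, Matrix.adjugate_apply]

private lemma vecMul_smul_right {n : ℕ} (v : Fin n → ℂ) (c : ℂ)
    (M : Matrix (Fin n) (Fin n) ℂ) : vecMul v (c • M) = c • vecMul v M := by
  funext j
  simp only [Matrix.vecMul, dotProduct, Matrix.smul_apply, smul_eq_mul,
    Pi.smul_apply, Finset.mul_sum]
  exact Finset.sum_congr rfl fun l _ => by ring

private lemma adjugate_ne_zero_of_simple {n : ℕ} {Φ : ℂ → Matrix (Fin n) (Fin n) ℂ} {zs : ℂ}
    (hΦ : ∀ i j, DifferentiableAt ℂ (fun z => Φ z i j) zs)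
    (hdet0 : (Φ zs).det = 0)
    (hsimple : deriv (fun z => (Φ z).det) zs ≠ 0) :
    (Φ zs).adjugate ≠ 0 := by
  intro hadj
  apply hsimple
  set E : ℂ → Matrix (Fin n) (Fin n) ℂ :=
    fun z => Matrix.of fun i j => dslope (fun w => Φ w i j) zs z with hE
  have hEΦ : ∀ z i j, Φ z i j = Φ zs i j + (z - zs) * E z i j := by
    intro z i j
    rcases eq_or_ne z zs with rfl | hne
    · simp
    · rw [hE]
      simp only [Matrix.of_apply]
      rw [dslope_of_ne _ hne, slope_def_field, mul_div_cancel₀ _ (sub_ne_zero.2 hne)]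
      ring
  have hEc : ∀ i j, ContinuousAt (fun z => E z i j) zs := fun i j =>
    continuousAt_dslope_same.2 (hΦ i j)
  have key : ∀ s : Finset (Fin n), ∃ G : ℂ → ℂ, ContinuousAt G zs ∧ G zs = 0 ∧
      ∀ z, (Matrix.of fun i j => if i ∈ s then Φ z i j else Φ zs i j).det = (z - zs) * G z := by
    intro s
    induction s using Finset.induction_on with
    | empty =>
      refine ⟨0, continuousAt_const, rfl, fun z => ?_⟩
      have : (Matrix.of fun i j => if i ∈ (∅ : Finset (Fin n)) then Φ z i j else Φ zs i j)
          = Φ zs := by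
        ext i j; simp
      rw [this, hdet0, Pi.zero_apply, mul_zero]
    | @insert a s ha ih =>
      obtain ⟨G, hGc, hG0, hGeq⟩ := ih
      set mix : ℂ → Matrix (Fin n) (Fin n) ℂ :=
        fun z => Matrix.of fun i j => if i ∈ s then Φ z i j else Φ zs i j with hmixdef
      refine ⟨fun z => G z + ((mix z).updateRow a (fun j => E z a j)).det, ?_, ?_, ?_⟩
      · apply hGc.add
        have hdetc : Continuous fun A : Matrix (Fin n) (Fin n) ℂ => A.det :=
          Continuous.matrix_det continuous_id
        apply hdetc.continuousAt.comp
        apply continuousAt_pi.2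
        intro i
        apply continuousAt_pi.2
        intro j
        simp only [Matrix.updateRow_apply, hmixdef, Matrix.of_apply]
        split_ifs with h1 h2
        · exact hEc a j
        · exact (hΦ i j).continuousAt
        · exact continuousAt_const
      · have hmixzs : mix zs = Φ zs := by
          ext i j; simp [hmixdef]
        show G zs + ((mix zs).updateRow a fun j => E zs a j).det = 0
        rw [hG0, hmixzs, det_updateRow_eq_sum', zero_add]
        simp [hadj]
      · intro z
        have h1 : (Matrix.of fun i j => if i ∈ insert a s then Φ z i j else Φ zs i j)
            = (mix z).updateRow a (fun j => Φ z a j) := by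
          ext i j
          rw [Matrix.updateRow_apply]
          rcases eq_or_ne i a with rfl | hne
          · simp
          · simp [hmixdef, hne, Finset.mem_insert]
        have h2 : (fun j => Φ z a j)
            = (fun j => Φ zs a j) + (z - zs) • fun j => E z a j := by
          funext j
          simp only [Pi.add_apply, Pi.smul_apply, smul_eq_mul]
          exact hEΦ z a j
        have h3 : (mix z).updateRow a (fun j => Φ zs a j) = mix z := by
          ext i j
          rw [Matrix.updateRow_apply]
          rcases eq_or_ne i a with rfl | hne
          · simp [hmixdef, ha]
          · simp [hne]
        rw [h1, h2, Matrix.det_updateRow_add, Matrix.det_updateRow_smul, h3, hGeq z]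
        show _ = (z - zs) * (G z + ((mix z).updateRow a fun j => E z a j).det)
        ring
  obtain ⟨G, hGc, hG0, hGeq⟩ := key Finset.univ
  have huniv : ∀ z, (Φ z).det = (z - zs) * G z := by
    intro z
    have h4 := hGeq z
    have : (Matrix.of fun i j => if i ∈ (Finset.univ : Finset (Fin n)) then Φ z i j
        else Φ zs i j) = Φ z := by
      ext i j; simp
    rwa [this] at h4
  have hdiff : DifferentiableAt ℂ (fun z => (Φ z).det) zs := detDiffAt hΦ
  have ht : Tendsto (slope (fun z => (Φ z).det) zs) (𝓝[≠] zs)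
      (𝓝 (deriv (fun z => (Φ z).det) zs)) :=
    hasDerivAt_iff_tendsto_slope.1 hdiff.hasDerivAt
  have ht2 : Tendsto (slope (fun z => (Φ z).det) zs) (𝓝[≠] zs) (𝓝 0) := by
    rw [← hG0]
    refine Filter.Tendsto.congr' ?_ (hGc.tendsto.mono_left nhdsWithin_le_nhds)
    filter_upwards [self_mem_nhdsWithin] with z hz
    rw [slope_def_field, hdet0, sub_zero, huniv z,
      mul_div_cancel_left₀ _ (sub_ne_zero.2 hz)]
  exact tendsto_nhds_unique ht ht2

private lemma prop_of_left_kernel {n : ℕ} {M : Matrix (Fin n) (Fin n) ℂ} {α β : Fin n → ℂ}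
    (hadj : M.adjugate ≠ 0) (hα : α ≠ 0) (hkα : vecMul α M = 0) (hkβ : vecMul β M = 0) :
    ∃ c : ℂ, β = c • α := by
  classical
  obtain ⟨k0, j0, hkj⟩ : ∃ k j, M.adjugate k j ≠ 0 := by
    by_contra h
    push_neg at h
    exact hadj (by ext i j; simp [h])
  set N := M.updateRow j0 (Pi.single k0 1) with hN
  have hNdet : N.det ≠ 0 := by rw [hN, ← Matrix.adjugate_apply]; exact hkj
  have hNinj : ∀ v : Fin n → ℂ, vecMul v N = 0 → v = 0 := by
    intro v hv
    have h5 := congrArg (fun w => vecMul w N⁻¹) hv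
    simpa [Matrix.vecMul_vecMul, Matrix.mul_nonsing_inv N (Ne.isUnit hNdet),
      Matrix.vecMul_one, Matrix.zero_vecMul] using h5
  have hrow : ∀ v : Fin n → ℂ, vecMul v M = 0 →
      vecMul v N = v j0 • ((Pi.single k0 1 : Fin n → ℂ) - M j0) := by
    intro v hv
    funext k
    have h0 : ∑ l, v l * M l k = 0 := by
      simpa [Matrix.vecMul, dotProduct] using congrFun hv k
    have hterm : ∀ l : Fin n, v l * N l k
        = v l * M l k + (if l = j0 then v j0 * ((Pi.single k0 1 : Fin n → ℂ) k - M j0 k) else 0) := by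
      intro l
      rw [hN, Matrix.updateRow_apply]
      rcases eq_or_ne l j0 with rfl | hne
      · simp; ring
      · simp [hne]
    calc vecMul v N k = ∑ l, v l * N l k := by
          simp [Matrix.vecMul, dotProduct]
      _ = ∑ l, (v l * M l k + (if l = j0 then v j0 * ((Pi.single k0 1 : Fin n → ℂ) k - M j0 k) else 0)) :=
          Finset.sum_congr rfl fun l _ => hterm l
      _ = (∑ l, v l * M l k)
            + ∑ l, (if l = j0 then v j0 * ((Pi.single k0 1 : Fin n → ℂ) k - M j0 k) else 0) :=
          Finset.sum_add_distrib
      _ = v j0 * ((Pi.single k0 1 : Fin n → ℂ) k - M j0 k) := by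
          rw [h0, zero_add, Finset.sum_ite_eq' Finset.univ j0]
          simp
      _ = (v j0 • ((Pi.single k0 1 : Fin n → ℂ) - M j0)) k := by simp
  have hu : α j0 ≠ 0 := by
    intro h0
    apply hα
    apply hNinj
    rw [hrow α hkα, h0, zero_smul]
  refine ⟨β j0 / α j0, ?_⟩
  have h6 : vecMul (β - (β j0 / α j0) • α) N = 0 := by
    rw [Matrix.sub_vecMul, Matrix.smul_vecMul, hrow α hkα, hrow β hkβ, smul_smul,
      div_mul_cancel₀ _ hu, sub_self]
  have h7 := hNinj _ h6
  rwa [sub_eq_zero] at h7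

/-- if `L(z) = Φ(z) L̂(z) Φ(z)⁻¹` with `Φ, L̂` holomorphic on a disc `U`,
`det Φ` having a simple zero at `z_s` (and `Φ` invertible elsewhere), and `α ≠ 0` spans the
left kernel of `Φ(z_s)`, then `tr L` extends holomorphically to `z_s`, and `αᵀ L(z)` extends
holomorphically to `z_s` with value at `z_s` proportional to `αᵀ`. -/
theorem stmt7 {r : ℕ} (hr : 0 < r) (z₀ : ℂ) (ρ : ℝ) (hρ : 0 < ρ) (zs : ℂ)
    (hzs : zs ∈ ball z₀ ρ)
    (Φ Lh L : ℂ → Matrix (Fin r) (Fin r) ℂ) (α : Fin r → ℂ) (hα : α ≠ 0)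
    (hΦ : ∀ i j, DifferentiableOn ℂ (fun z => Φ z i j) (ball z₀ ρ))
    (hLh : ∀ i j, DifferentiableOn ℂ (fun z => Lh z i j) (ball z₀ ρ))
    (hunit : ∀ z ∈ ball z₀ ρ, z ≠ zs → IsUnit (Φ z))
    (hdet0 : (Φ zs).det = 0)
    (hsimple : deriv (fun z => (Φ z).det) zs ≠ 0)
    (hker : vecMul α (Φ zs) = 0)
    (hLdef : ∀ z ∈ ball z₀ ρ, z ≠ zs → L z = Φ z * Lh z * (Φ z)⁻¹) :
    (∃ t : ℂ → ℂ, DifferentiableOn ℂ t (ball z₀ ρ) ∧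
        ∀ z ∈ ball z₀ ρ, z ≠ zs → t z = (L z).trace) ∧
    (∃ A : ℂ → Fin r → ℂ, (∀ i, DifferentiableOn ℂ (fun z => A z i) (ball z₀ ρ)) ∧
        (∀ z ∈ ball z₀ ρ, z ≠ zs → A z = vecMul α (L z)) ∧
        ∃ c : ℂ, A zs = c • α) := by
  classical
  have hBn : ball z₀ ρ ∈ 𝓝 zs := isOpen_ball.mem_nhds hzs
  have hdet : ∀ z ∈ ball z₀ ρ, z ≠ zs → (Φ z).det ≠ 0 := fun z hz hne =>
    ((Matrix.isUnit_iff_isUnit_det _).mp (hunit z hz hne)).ne_zero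
  constructor
  · -- trace part
    refine ⟨fun z => (Lh z).trace, ?_, ?_⟩
    · have htr : (fun z => (Lh z).trace) = fun z => ∑ i, Lh z i i := by
        funext z; simp [Matrix.trace, Matrix.diag]
      rw [htr]
      exact DifferentiableOn.fun_sum fun i _ => hLh i i
    · intro z hz hne
      rw [hLdef z hz hne, Matrix.trace_mul_comm, ← mul_assoc,
        Matrix.nonsing_inv_mul _ (Ne.isUnit (hdet z hz hne)), one_mul]
  · -- vecMul part
    set h : ℂ → ℂ := fun z => (Φ z).det with hhdef
    set g : Fin r → ℂ → ℂ := fun j z => vecMul α (Φ z) j with hgdef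
    have hgdiff : ∀ j, DifferentiableOn ℂ (g j) (ball z₀ ρ) := by
      intro j
      have : g j = fun z => ∑ l, α l * Φ z l j := by
        funext z; simp [hgdef, Matrix.vecMul, dotProduct]
      rw [this]
      exact DifferentiableOn.fun_sum fun l _ => (hΦ l j).const_mul _
    have hhdiff : DifferentiableOn ℂ h (ball z₀ ρ) := detDiffOn hΦ
    have hg0 : ∀ j, g j zs = 0 := fun j => congrFun hker j
    have hh0 : h zs = 0 := hdet0
    have hgd : ∀ j, DifferentiableOn ℂ (dslope (g j) zs) (ball z₀ ρ) :=
      fun j => (Complex.differentiableOn_dslope hBn).2 (hgdiff j)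
    have hhd : DifferentiableOn ℂ (dslope h zs) (ball z₀ ρ) :=
      (Complex.differentiableOn_dslope hBn).2 hhdiff
    have hhdne : ∀ z ∈ ball z₀ ρ, dslope h zs z ≠ 0 := by
      intro z hz
      rcases eq_or_ne z zs with rfl | hne
      · rw [dslope_same]; exact hsimple
      · rw [dslope_of_ne _ hne, slope_def_field, hh0, sub_zero]
        exact div_ne_zero (hdet z hz hne) (sub_ne_zero.2 hne)
    set A : ℂ → Fin r → ℂ := fun z =>
      vecMul (fun j => dslope (g j) zs z / dslope h zs z) (Lh z * (Φ z).adjugate) with hAdef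
    have hadjd : ∀ k i, DifferentiableOn ℂ (fun z => (Φ z).adjugate k i) (ball z₀ ρ) := by
      intro k i
      simp only [Matrix.adjugate_apply]
      apply detDiffOn
      intro l m
      simp only [Matrix.updateRow_apply]
      split_ifs with h1
      · exact differentiableOn_const _
      · exact hΦ l m
    have hAdiff : ∀ i, DifferentiableOn ℂ (fun z => A z i) (ball z₀ ρ) := by
      intro i
      have : (fun z => A z i) = fun z => ∑ j, (dslope (g j) zs z / dslope h zs z)
          * ∑ k, Lh z j k * (Φ z).adjugate k i := by
        funext z
        simp [hAdef, Matrix.vecMul, dotProduct, Matrix.mul_apply]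
      rw [this]
      exact DifferentiableOn.fun_sum fun j _ =>
        ((hgd j).div hhd hhdne).mul (DifferentiableOn.fun_sum fun k _ => (hLh j k).mul (hadjd k i))
    have hAeq : ∀ z ∈ ball z₀ ρ, z ≠ zs → A z = vecMul α (L z) := by
      intro z hz hne
      have hz0 : z - zs ≠ 0 := sub_ne_zero.2 hne
      have hfg : (fun j => dslope (g j) zs z / dslope h zs z)
          = (h z)⁻¹ • vecMul α (Φ z) := by
        funext j
        rw [dslope_of_ne _ hne, dslope_of_ne _ hne, slope_def_field, slope_def_field,
          hg0 j, hh0, sub_zero, sub_zero, div_div_div_comm, div_self hz0, div_one]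
        simp only [Pi.smul_apply, smul_eq_mul]
        rw [div_eq_inv_mul]
      have hinv : (Φ z)⁻¹ = (h z)⁻¹ • (Φ z).adjugate := by
        rw [Matrix.inv_def, Ring.inverse_eq_inv]
      rw [hAdef]
      calc vecMul (fun j => dslope (g j) zs z / dslope h zs z) (Lh z * (Φ z).adjugate)
          = vecMul ((h z)⁻¹ • vecMul α (Φ z)) (Lh z * (Φ z).adjugate) := by rw [hfg]
        _ = (h z)⁻¹ • vecMul (vecMul α (Φ z)) (Lh z * (Φ z).adjugate) := by
            rw [Matrix.smul_vecMul]
        _ = (h z)⁻¹ • vecMul α (Φ z * (Lh z * (Φ z).adjugate)) := by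
            rw [Matrix.vecMul_vecMul]
        _ = vecMul α ((h z)⁻¹ • (Φ z * Lh z * (Φ z).adjugate)) := by
            rw [vecMul_smul_right, mul_assoc]
        _ = vecMul α (Φ z * Lh z * (Φ z)⁻¹) := by
            rw [hinv, Matrix.mul_smul]
        _ = vecMul α (L z) := by rw [hLdef z hz hne]
    have hA0 : vecMul (A zs) (Φ zs) = 0 := by
      funext i
      have hcF : ContinuousAt (fun z => vecMul (A z) (Φ z) i) zs := by
        have hrep : (fun z => vecMul (A z) (Φ z) i) = fun z => ∑ l, A z l * Φ z l i := by
          funext z; simp [Matrix.vecMul, dotProduct]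
        rw [hrep]
        refine DifferentiableAt.continuousAt (𝕜 := ℂ) ?_
        exact DifferentiableAt.fun_sum fun l _ =>
          ((hAdiff l).differentiableAt hBn).mul ((hΦ l i).differentiableAt hBn)
      have hcG : ContinuousAt (fun z => ∑ l, g l z * Lh z l i) zs := by
        refine DifferentiableAt.continuousAt (𝕜 := ℂ) ?_
        exact DifferentiableAt.fun_sum fun l _ =>
          ((hgdiff l).differentiableAt hBn).mul ((hLh l i).differentiableAt hBn)
      have hFeqG : ∀ᶠ z in 𝓝[≠] zs, vecMul (A z) (Φ z) i = ∑ l, g l z * Lh z l i := by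
        filter_upwards [self_mem_nhdsWithin,
          mem_nhdsWithin_of_mem_nhds hBn] with z hz1 hz2
        have hne : z ≠ zs := hz1
        rw [hAeq z hz2 hne, Matrix.vecMul_vecMul, hLdef z hz2 hne, mul_assoc,
          Matrix.nonsing_inv_mul _ (Ne.isUnit (hdet z hz2 hne)), mul_one,
          ← Matrix.vecMul_vecMul]
        simp [Matrix.vecMul, dotProduct, hgdef]
      have ht1 : Tendsto (fun z => vecMul (A z) (Φ z) i) (𝓝[≠] zs)
          (𝓝 (vecMul (A zs) (Φ zs) i)) := hcF.tendsto.mono_left nhdsWithin_le_nhds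
      have ht2 : Tendsto (fun z => vecMul (A z) (Φ z) i) (𝓝[≠] zs)
          (𝓝 (∑ l, g l zs * Lh zs l i)) :=
        (hcG.tendsto.mono_left nhdsWithin_le_nhds).congr' (hFeqG.mono fun z hz => hz.symm)
      have := tendsto_nhds_unique ht1 ht2
      rw [this]
      simp [hg0]
    have hadjne : (Φ zs).adjugate ≠ 0 :=
      adjugate_ne_zero_of_simple (fun i j => (hΦ i j).differentiableAt hBn) hdet0 hsimple
    obtain ⟨c, hc⟩ := prop_of_left_kernel hadjne hα hker hA0
    exact ⟨A, hAdiff, hAeq, c, hc⟩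
end

section
/- Let L, M, K, Ψ, F be smooth families of r×r matrices with K, F diagonal, Ψ invertible, L Ψ = Ψ K. Then Tr(Ψ^{−1}[M,L] δΨ) = Tr(Ψ^{−1} M Ψ δK − M δL), where δ is any derivation satisfying L δΨ − δΨ K = Ψ δK − δL Ψ. -/
open Matrix

/-- with `L Ψ = Ψ K` (`K` diagonal, `Ψ` invertible) and a derivation `δ`
satisfying the differentiated eigenvalue relation `L δΨ − δΨ K = Ψ δK − δL Ψ`, one has
`Tr(Ψ⁻¹ [M,L] δΨ) = Tr(Ψ⁻¹ M Ψ δK − M δL)`. -/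
theorem stmt12 {r : ℕ} (L M K Ψ dΨ dK dL : Matrix (Fin r) (Fin r) ℂ)
    (hΨ : IsUnit Ψ) (hK : K.IsDiag) (hdK : dK.IsDiag)
    (heig : L * Ψ = Ψ * K)
    (hd : L * dΨ - dΨ * K = Ψ * dK - dL * Ψ) :
    (Ψ⁻¹ * (M * L - L * M) * dΨ).trace = (Ψ⁻¹ * M * Ψ * dK - M * dL).trace := by
  have hdet := (Matrix.isUnit_iff_isUnit_det Ψ).mp hΨ
  have h1 : Ψ⁻¹ * Ψ = 1 := Matrix.nonsing_inv_mul Ψ hdet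
  have h2 : Ψ * Ψ⁻¹ = 1 := Matrix.mul_nonsing_inv Ψ hdet
  have hc : Ψ⁻¹ * L = K * Ψ⁻¹ := by
    calc Ψ⁻¹ * L = Ψ⁻¹ * (L * Ψ) * Ψ⁻¹ := by
          rw [Matrix.mul_assoc, Matrix.mul_assoc, h2, Matrix.mul_one]
      _ = Ψ⁻¹ * (Ψ * K) * Ψ⁻¹ := by rw [heig]
      _ = K * Ψ⁻¹ := by rw [← Matrix.mul_assoc, h1, Matrix.one_mul]
  have hL : L * dΨ = Ψ * dK - dL * Ψ + dΨ * K := sub_eq_iff_eq_add.mp hd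
  have expand : Ψ⁻¹ * (M * L - L * M) * dΨ =
      (Ψ⁻¹ * M * Ψ * dK - Ψ⁻¹ * M * (dL * Ψ) + Ψ⁻¹ * M * dΨ * K)
        - K * (Ψ⁻¹ * M * dΨ) := by
    have e1 : Ψ⁻¹ * (M * L - L * M) * dΨ
        = Ψ⁻¹ * M * (L * dΨ) - (Ψ⁻¹ * L) * (M * dΨ) := by noncomm_ring
    rw [e1, hL, hc]
    noncomm_ring
  rw [expand]
  have t1 : (Ψ⁻¹ * M * (dL * Ψ)).trace = (M * dL).trace := by
    rw [← Matrix.mul_assoc, Matrix.trace_mul_comm, ← Matrix.mul_assoc,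
      ← Matrix.mul_assoc, h2, Matrix.one_mul]
  have t2 : (Ψ⁻¹ * M * dΨ * K).trace = (K * (Ψ⁻¹ * M * dΨ)).trace := by
    rw [Matrix.trace_mul_comm]
  simp only [Matrix.trace_sub, Matrix.trace_add, t1, t2]
  ring
end

section
/- Let Ψ(x,q) be an invertible matrix solution of (∂_x − L(x,q))Ψ = 0 with monodromy Ψ(x+T,q) = Ψ(x,q) e^{p(q)} for a matrix p(q) independent of x (δp is its variation in parameters q and in the family). Then Tr(Ψ^{−1} δL ∧ δΨ)(x+T) − Tr(Ψ^{−1} δL ∧ δΨ)(x) = Tr((Ψ^{−1} δL Ψ)(x) ∧ δp), and moreover Tr(Ψ^{−1} δL Ψ) = ∂_x Tr(Ψ^{−1} δΨ). -/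
open Matrix

private lemma det_diffAt {r : ℕ} {M : ℝ → Matrix (Fin r) (Fin r) ℂ} {x : ℝ}
    (h : ∀ i j, DifferentiableAt ℝ (fun y => M y i j) x) :
    DifferentiableAt ℝ (fun y => (M y).det) x := by
  simp only [Matrix.det_apply']
  exact DifferentiableAt.fun_sum fun σ _ =>
    (DifferentiableAt.fun_finsetProd fun i _ => h (σ i) i).const_mul _

private lemma inv_entry_diffAt {r : ℕ} {Ψ : ℝ → Matrix (Fin r) (Fin r) ℂ} {x : ℝ}
    (hinv : ∀ x, IsUnit (Ψ x))
    (h : ∀ i j, DifferentiableAt ℝ (fun y => Ψ y i j) x) (i j : Fin r) :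
    DifferentiableAt ℝ (fun y => (Ψ y)⁻¹ i j) x := by
  have hfun : (fun y => (Ψ y)⁻¹ i j)
      = fun y => ((Ψ y).det)⁻¹ * (Ψ y).adjugate i j := by
    funext y
    rw [Matrix.inv_def, Matrix.smul_apply, Ring.inverse_eq_inv, smul_eq_mul]
  rw [hfun]
  have hdet : DifferentiableAt ℝ (fun y => (Ψ y).det) x := det_diffAt h
  have hne : (Ψ x).det ≠ 0 := by
    have := (Matrix.isUnit_iff_isUnit_det _).mp (hinv x)
    exact IsUnit.ne_zero this
  have hadj : DifferentiableAt ℝ (fun y => (Ψ y).adjugate i j) x := by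
    have : (fun y => (Ψ y).adjugate i j)
        = fun y => ((Ψ y).updateRow j (Pi.single i 1)).det := by
      funext y; rw [Matrix.adjugate_apply]
    rw [this]
    apply det_diffAt
    intro a b
    rcases eq_or_ne a j with rfl | hne'
    · simp only [Matrix.updateRow_self]
      exact differentiableAt_const _
    · simp only [Matrix.updateRow_apply, if_neg hne']
      exact h a b
  exact (hdet.inv hne).mul hadj

private lemma inv_entry_hasDeriv {r : ℕ} {L Ψ : ℝ → Matrix (Fin r) (Fin r) ℂ} {x : ℝ}
    (hinv : ∀ x, IsUnit (Ψ x))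
    (hODE : ∀ x, ∀ i j, HasDerivAt (fun y => Ψ y i j) ((L x * Ψ x) i j) x) :
    ∀ i j, HasDerivAt (fun y => (Ψ y)⁻¹ i j) ((-((Ψ x)⁻¹ * L x)) i j) x := by
  have hdiff : ∀ i j, DifferentiableAt ℝ (fun y => Ψ y i j) x :=
    fun i j => (hODE x i j).differentiableAt
  set D : Matrix (Fin r) (Fin r) ℂ := Matrix.of fun i j => deriv (fun y => (Ψ y)⁻¹ i j) x with hDdef
  have hD : ∀ i j, HasDerivAt (fun y => (Ψ y)⁻¹ i j) (D i j) x :=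
    fun i j => (inv_entry_diffAt hinv hdiff i j).hasDerivAt
  have hdetx : ∀ y, IsUnit (Ψ y).det := fun y => (Matrix.isUnit_iff_isUnit_det _).mp (hinv y)
  have key : D * Ψ x + (Ψ x)⁻¹ * (L x * Ψ x) = 0 := by
    ext i j
    have h1 : HasDerivAt (fun y => ∑ k, (Ψ y)⁻¹ i k * Ψ y k j)
        (∑ k, (D i k * Ψ x k j + (Ψ x)⁻¹ i k * (L x * Ψ x) k j)) x :=
      HasDerivAt.fun_sum fun k _ => (hD i k).mul (hODE x k j)
    have h2 : (fun y => ∑ k, (Ψ y)⁻¹ i k * Ψ y k j) = fun _ => (1 : Matrix (Fin r) (Fin r) ℂ) i j := by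
      funext y
      rw [← Matrix.mul_apply, Matrix.nonsing_inv_mul _ (hdetx y)]
    rw [h2] at h1
    have h3 := h1.unique (hasDerivAt_const _ _)
    simp only [Matrix.add_apply, Matrix.zero_apply]
    rw [Matrix.mul_apply, Matrix.mul_apply, ← Finset.sum_add_distrib]
    exact h3
  have hDval : D = -((Ψ x)⁻¹ * L x) := by
    have h4 : D * Ψ x = -((Ψ x)⁻¹ * (L x * Ψ x)) := by
      rw [eq_neg_iff_add_eq_zero]; exact key
    calc D = D * (Ψ x * (Ψ x)⁻¹) := by rw [Matrix.mul_nonsing_inv _ (hdetx x), mul_one]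
    _ = (D * Ψ x) * (Ψ x)⁻¹ := by rw [mul_assoc]
    _ = -((Ψ x)⁻¹ * (L x * Ψ x)) * (Ψ x)⁻¹ := by rw [h4]
    _ = -((Ψ x)⁻¹ * L x) := by
        rw [neg_mul, mul_assoc, mul_assoc, Matrix.mul_nonsing_inv _ (hdetx x), mul_one]
  intro i j
  rw [← hDval]
  exact hD i j

private lemma trace_hasDeriv {r : ℕ} {L Lu Ψ Ψu : ℝ → Matrix (Fin r) (Fin r) ℂ} {x : ℝ}
    (hinv : ∀ x, IsUnit (Ψ x))
    (hODE : ∀ x, ∀ i j, HasDerivAt (fun y => Ψ y i j) ((L x * Ψ x) i j) x)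
    (hODEu : ∀ i j, HasDerivAt (fun y => Ψu y i j) ((Lu x * Ψ x + L x * Ψu x) i j) x) :
    HasDerivAt (fun y => ((Ψ y)⁻¹ * Ψu y).trace) (((Ψ x)⁻¹ * Lu x * Ψ x).trace) x := by
  have hD := inv_entry_hasDeriv (L := L) (Ψ := Ψ) (x := x) hinv hODE
  have h1 : HasDerivAt (fun y => ∑ i, ∑ k, (Ψ y)⁻¹ i k * Ψu y k i)
      (∑ i, ∑ k, ((-((Ψ x)⁻¹ * L x)) i k * Ψu x k i
        + (Ψ x)⁻¹ i k * (Lu x * Ψ x + L x * Ψu x) k i)) x :=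
    HasDerivAt.fun_sum fun i _ => HasDerivAt.fun_sum fun k _ => (hD i k).mul (hODEu k i)
  have h2 : (fun y => ((Ψ y)⁻¹ * Ψu y).trace)
      = fun y => ∑ i, ∑ k, (Ψ y)⁻¹ i k * Ψu y k i := by
    funext y; simp [Matrix.trace, Matrix.diag, Matrix.mul_apply]
  have hM : -((Ψ x)⁻¹ * L x) * Ψu x + (Ψ x)⁻¹ * (Lu x * Ψ x + L x * Ψu x)
      = (Ψ x)⁻¹ * Lu x * Ψ x := by noncomm_ring
  have h3 : (∑ i, ∑ k, ((-((Ψ x)⁻¹ * L x)) i k * Ψu x k i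
        + (Ψ x)⁻¹ i k * (Lu x * Ψ x + L x * Ψu x) k i))
      = (-((Ψ x)⁻¹ * L x) * Ψu x + (Ψ x)⁻¹ * (Lu x * Ψ x + L x * Ψu x)).trace := by
    simp [Matrix.trace, Matrix.diag, Matrix.add_apply, Matrix.mul_apply,
      Finset.sum_add_distrib]
  rw [h2, show ((Ψ x)⁻¹ * Lu x * Ψ x).trace
      = (∑ i, ∑ k, ((-((Ψ x)⁻¹ * L x)) i k * Ψu x k i
        + (Ψ x)⁻¹ i k * (Lu x * Ψ x + L x * Ψu x) k i)) by rw [h3, hM]]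
  exact h1

private lemma traceHelper {r : ℕ} (A B C E p : Matrix (Fin r) (Fin r) ℂ)
    (hE : IsUnit E) (hc : E * p = p * E) :
    (E⁻¹ * A * (B * E + C * E * p)).trace = (A * B).trace + (A * C * p).trace := by
  have hEi : E * E⁻¹ = 1 := Matrix.mul_nonsing_inv _ ((Matrix.isUnit_iff_isUnit_det _).mp hE)
  have tr1 : ∀ X : Matrix (Fin r) (Fin r) ℂ, (E⁻¹ * X * E).trace = X.trace := by
    intro X
    rw [Matrix.trace_mul_comm, ← Matrix.mul_assoc, hEi, Matrix.one_mul]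
  have hcp : C * E * p = C * p * E := by rw [mul_assoc, hc, ← mul_assoc]
  have expand : E⁻¹ * A * (B * E + C * E * p)
      = E⁻¹ * (A * B) * E + E⁻¹ * (A * C * p) * E := by
    rw [hcp]; noncomm_ring
  rw [expand, Matrix.trace_add, tr1, tr1]

/-- let `Ψ(x)` be an invertible solution of `(∂_x − L)Ψ = 0` with monodromy
`Ψ(x+T) = Ψ(x) E`, `E = e^{pT}` commuting with the variations `pu, pv` of the quasimomentum
matrix `p`.  With `δ` evaluated on two independent directions `u, v` (so `Lu, Lv, Ψu, Ψv`
are the corresponding variations, `δΨ_x = δL Ψ + L δΨ`, and `δΨ(x+T) = δΨ(x) E + Ψ(x) E δp`),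
one has
`Tr(Ψ⁻¹ δL ∧ δΨ)(x+T) − Tr(Ψ⁻¹ δL ∧ δΨ)(x) = Tr((Ψ⁻¹ δL Ψ)(x) ∧ δp)` and
`Tr(Ψ⁻¹ δL Ψ) = ∂_x Tr(Ψ⁻¹ δΨ)` (direction-wise). -/
theorem stmt17 {r : ℕ} (T : ℝ)
    (L Lu Lv Ψ Ψu Ψv : ℝ → Matrix (Fin r) (Fin r) ℂ)
    (E pu pv : Matrix (Fin r) (Fin r) ℂ)
    (hinv : ∀ x, IsUnit (Ψ x))
    (hODE : ∀ x, ∀ i j, HasDerivAt (fun y => Ψ y i j) ((L x * Ψ x) i j) x)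
    (hODEu : ∀ x, ∀ i j, HasDerivAt (fun y => Ψu y i j) ((Lu x * Ψ x + L x * Ψu x) i j) x)
    (hODEv : ∀ x, ∀ i j, HasDerivAt (fun y => Ψv y i j) ((Lv x * Ψ x + L x * Ψv x) i j) x)
    (hLper : ∀ x, L (x + T) = L x)
    (hLuper : ∀ x, Lu (x + T) = Lu x)
    (hLvper : ∀ x, Lv (x + T) = Lv x)
    (hmon : ∀ x, Ψ (x + T) = Ψ x * E)
    (hmonu : ∀ x, Ψu (x + T) = Ψu x * E + Ψ x * E * pu)
    (hmonv : ∀ x, Ψv (x + T) = Ψv x * E + Ψ x * E * pv)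
    (hE : IsUnit E) (hEpu : E * pu = pu * E) (hEpv : E * pv = pv * E) :
    (∀ x : ℝ,
      ((Ψ (x + T))⁻¹ * Lu (x + T) * Ψv (x + T) - (Ψ (x + T))⁻¹ * Lv (x + T) * Ψu (x + T)).trace
        - ((Ψ x)⁻¹ * Lu x * Ψv x - (Ψ x)⁻¹ * Lv x * Ψu x).trace
      = ((Ψ x)⁻¹ * Lu x * Ψ x * pv - (Ψ x)⁻¹ * Lv x * Ψ x * pu).trace) ∧
    (∀ x : ℝ,
      HasDerivAt (fun y => ((Ψ y)⁻¹ * Ψu y).trace) (((Ψ x)⁻¹ * Lu x * Ψ x).trace) x ∧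
      HasDerivAt (fun y => ((Ψ y)⁻¹ * Ψv y).trace) (((Ψ x)⁻¹ * Lv x * Ψ x).trace) x) := by
  constructor
  · intro x
    rw [hLuper, hLvper, hmon, hmonu, hmonv, Matrix.mul_inv_rev]
    have e1 : E⁻¹ * (Ψ x)⁻¹ * Lu x * (Ψv x * E + Ψ x * E * pv)
        = E⁻¹ * ((Ψ x)⁻¹ * Lu x) * (Ψv x * E + Ψ x * E * pv) := by
      rw [Matrix.mul_assoc E⁻¹]
    have e2 : E⁻¹ * (Ψ x)⁻¹ * Lv x * (Ψu x * E + Ψ x * E * pu)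
        = E⁻¹ * ((Ψ x)⁻¹ * Lv x) * (Ψu x * E + Ψ x * E * pu) := by
      rw [Matrix.mul_assoc E⁻¹]
    rw [Matrix.trace_sub, Matrix.trace_sub, Matrix.trace_sub, e1, e2,
      traceHelper _ _ _ _ _ hE hEpv, traceHelper _ _ _ _ _ hE hEpu]
    ring_nf
  · intro x
    exact ⟨trace_hasDeriv hinv hODE (hODEu x), trace_hasDeriv hinv hODE (hODEv x)⟩
end
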